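/- arXiv:2309.05144 — 7 statements merged into one kernel-verified Lean document; each statement's English description precedes it below -/
import Mathlib

section
/- Let V and W be complex vector spaces. If α₁, α₂, α₃ ∈ V are three vectors, any two of which are linearly independent (pairwise linearly independent), and β₁, β₂, β₃ ∈ W are nonzero vectors that are not all pairwise proportional, then the three tensors α₁ ⊗ β₁, α₂ ⊗ β₂, α₃ ⊗ β₃ are linearly independent in V ⊗ W. -/
/-!
If `a1, a2, a3` are linearly independent, so are the `aᵢ ⊗ bᵢ` for any nonzero `bᵢ`,
because tensoring with `W` preserves injectivity over a field. Otherwise `a1 = s a2 + t a3`,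
with `s, t ≠ 0` since the `aᵢ` are pairwise independent, and a relation `∑ cᵢ aᵢ ⊗ bᵢ = 0` becomes
`a2 ⊗ (c1 s b1 + c2 b2) + a3 ⊗ (c1 t b1 + c3 b3) = 0`, so both right factors vanish. If `c1 ≠ 0`
this puts `b2` and `b3` on the line through `b1`, making the `bᵢ` pairwise proportional. Hence
`c1 = 0`, and then `c2 = c3 = 0` as `b2, b3 ≠ 0`.
-/

open TensorProduct

section

variable {K V W : Type*} [Field K] [AddCommGroup V] [Module K V] [AddCommGroup W] [Module K W]

theorem LinearIndependent.rTensor_linearCombination_injective {ι : Type*} {a : ι → V}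
    (ha : LinearIndependent K a) :
    Function.Injective ((Finsupp.linearCombination K a).rTensor W) :=
  Module.Flat.rTensor_preserves_injective_linearMap _ ha

theorem LinearIndependent.tmul_of_ne_zero {ι : Type*} {a : ι → V} {b : ι → W}
    (ha : LinearIndependent K a) (hb : ∀ i, b i ≠ 0) :
    LinearIndependent K fun i ↦ a i ⊗ₜ[K] b i := by
  classical
  have hinj : Function.Injective
      ((Finsupp.linearCombination K a).rTensor W ∘ₗ (finsuppScalarLeft K W ι).symm.toLinearMap) :=
    ha.rTensor_linearCombination_injective.comp (finsuppScalarLeft K W ι).symm.injective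
  simpa [Function.comp_def] using
    (Finsupp.linearIndependent_single_of_ne_zero hb).map_injOn _ hinj.injOn

theorem LinearIndependent.eq_zero_of_sum_tmul_eq_zero {ι : Type*} [Fintype ι] {a : ι → V}
    (ha : LinearIndependent K a) {m : ι → W} (h : ∑ i, a i ⊗ₜ[K] m i = 0) : m = 0 := by
  classical
  have hx : ∑ i, Finsupp.single i (1 : K) ⊗ₜ[K] m i = 0 :=
    ha.rTensor_linearCombination_injective (by simpa using h)
  funext j
  simpa [Finset.sum_apply', Finsupp.single_apply] using
    congrArg (fun x ↦ finsuppScalarLeft K W ι x j) hx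

theorem mem_span_singleton_of_smul_add_smul_eq_zero {x y : V} {c d : K} (hx : x ≠ 0)
    (hc : c ≠ 0) (h : c • x + d • y = 0) : y ∈ K ∙ x := by
  have hd : d ≠ 0 := by
    rintro rfl
    rw [zero_smul, add_zero] at h
    exact hx ((smul_eq_zero.mp h).resolve_left hc)
  rw [← Submodule.smul_mem_iff _ hd, eq_neg_of_add_eq_zero_right h]
  exact Submodule.neg_mem _ (Submodule.smul_mem _ _ (Submodule.mem_span_singleton_self x))

theorem not_linearIndependent_pair_of_mem_span_singleton {x y z : V} (hx : x ∈ K ∙ z)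
    (hy : y ∈ K ∙ z) : ¬ LinearIndependent K ![x, y] := by
  intro h
  obtain ⟨p, rfl⟩ := Submodule.mem_span_singleton.mp hx
  obtain ⟨q, rfl⟩ := Submodule.mem_span_singleton.mp hy
  obtain ⟨-, hp⟩ := LinearIndependent.pair_iff.mp h q (-p) (by module)
  exact h.ne_zero 0 (by simp [neg_eq_zero.mp hp])

theorem not_linearIndependent_smul_pair (t : K) (x : V) : ¬ LinearIndependent K ![t • x, x] :=
  not_linearIndependent_pair_of_mem_span_singleton
    (Submodule.smul_mem _ _ (Submodule.mem_span_singleton_self x))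
    (Submodule.mem_span_singleton_self x)

theorem linearIndependent_tmul_three_of_mem_span_pair {a1 a2 a3 : V} {b1 b2 b3 : W}
    (ha12 : LinearIndependent K ![a1, a2]) (ha13 : LinearIndependent K ![a1, a3])
    (ha23 : LinearIndependent K ![a2, a3]) (hb1 : b1 ≠ 0) (hb2 : b2 ≠ 0) (hb3 : b3 ≠ 0)
    (hb : LinearIndependent K ![b1, b2] ∨ LinearIndependent K ![b1, b3] ∨
      LinearIndependent K ![b2, b3])
    (ha : a1 ∈ Submodule.span K {a2, a3}) :
    LinearIndependent K ![a1 ⊗ₜ[K] b1, a2 ⊗ₜ[K] b2, a3 ⊗ₜ[K] b3] := by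
  obtain ⟨s, t, rfl⟩ := Submodule.mem_span_pair.mp ha
  have hs : s ≠ 0 := by
    rintro rfl
    rw [zero_smul, zero_add] at ha13
    exact not_linearIndependent_smul_pair t a3 ha13
  have ht : t ≠ 0 := by
    rintro rfl
    rw [zero_smul, add_zero] at ha12
    exact not_linearIndependent_smul_pair s a2 ha12
  rw [Fintype.linearIndependent_iff]
  intro c hc
  have hsum :
      a2 ⊗ₜ[K] ((c 0 * s) • b1 + c 1 • b2) + a3 ⊗ₜ[K] ((c 0 * t) • b1 + c 2 • b3) = 0 := by
    rw [← hc]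
    simp only [Fin.sum_univ_three, Matrix.cons_val_zero, Matrix.cons_val_one, Matrix.cons_val_two,
      Matrix.head_cons, Matrix.tail_cons, add_tmul, tmul_add, smul_add, smul_tmul', mul_smul,
      tmul_smul]
    abel
  have h23 := ha23.eq_zero_of_sum_tmul_eq_zero (m := ![_, _]) (by simpa using hsum)
  have h2 : (c 0 * s) • b1 + c 1 • b2 = 0 := congrFun h23 0
  have h3 : (c 0 * t) • b1 + c 2 • b3 = 0 := congrFun h23 1
  have hc0 : c 0 = 0 := by
    by_contra hc0
    have hb2' := mem_span_singleton_of_smul_add_smul_eq_zero hb1 (mul_ne_zero hc0 hs) h2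
    have hb3' := mem_span_singleton_of_smul_add_smul_eq_zero hb1 (mul_ne_zero hc0 ht) h3
    have hb1' := Submodule.mem_span_singleton_self (R := K) b1
    rcases hb with h | h | h
    exacts [not_linearIndependent_pair_of_mem_span_singleton hb1' hb2' h,
      not_linearIndependent_pair_of_mem_span_singleton hb1' hb3' h,
      not_linearIndependent_pair_of_mem_span_singleton hb2' hb3' h]
  simp only [hc0, zero_mul, zero_smul, zero_add, smul_eq_zero, hb2, hb3, or_false] at h2 h3
  intro i
  fin_cases i
  exacts [hc0, h2, h3]

end

theorem stmt_0 {V W : Type*} [AddCommGroup V] [Module ℂ V]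
    [AddCommGroup W] [Module ℂ W]
    (a1 a2 a3 : V) (b1 b2 b3 : W)
    (ha12 : LinearIndependent ℂ ![a1, a2])
    (ha13 : LinearIndependent ℂ ![a1, a3])
    (ha23 : LinearIndependent ℂ ![a2, a3])
    (hb1 : b1 ≠ 0) (hb2 : b2 ≠ 0) (hb3 : b3 ≠ 0)
    (hb : LinearIndependent ℂ ![b1, b2] ∨ LinearIndependent ℂ ![b1, b3] ∨
      LinearIndependent ℂ ![b2, b3]) :
    LinearIndependent ℂ ![a1 ⊗ₜ[ℂ] b1, a2 ⊗ₜ[ℂ] b2, a3 ⊗ₜ[ℂ] b3] := by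
  by_cases ha : a1 ∈ Submodule.span ℂ {a2, a3}
  · exact linearIndependent_tmul_three_of_mem_span_pair ha12 ha13 ha23 hb1 hb2 hb3 hb ha
  have ha123 : LinearIndependent ℂ ![a1, a2, a3] :=
    ha23.finCons (by rwa [Matrix.range_cons_cons_empty])
  have hfamily : ![a1 ⊗ₜ[ℂ] b1, a2 ⊗ₜ[ℂ] b2, a3 ⊗ₜ[ℂ] b3] =
      fun i ↦ ![a1, a2, a3] i ⊗ₜ[ℂ] ![b1, b2, b3] i := by
    ext i
    fin_cases i <;> rfl
  rw [hfamily]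
  exact ha123.tmul_of_ne_zero (by simp [Fin.forall_fin_succ, hb1, hb2, hb3])
end

section
/- Let V and W be complex vector spaces, e₁, e₂ ∈ V linearly independent, and f₁, f₂, f₃ ∈ W linearly independent. Let a, b ∈ ℂ with a ≠ 0 and b ≠ 0. If u·(e₁ ⊗ f₁) + v·(e₂ ⊗ f₂) + w·((a·e₁ + b·e₂) ⊗ f₃) is a nonzero simple tensor x ⊗ y, then either u = v = 0, or u = w = 0, or v = w = 0. -/
open TensorProduct

lemma exists_dual_family {n : ℕ} {V : Type*} [AddCommGroup V] [Module ℂ V]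
    (v : Fin n → V) (hv : LinearIndependent ℂ v) :
    ∃ φ : Fin n → (V →ₗ[ℂ] ℂ), ∀ i j, (φ i) (v j) = if j = i then 1 else 0 := by
  let B := Module.Basis.extend ((linearIndepOn_id_range_iff hv.injective).mpr hv)
  have hmem : ∀ i, v i ∈ ((linearIndepOn_id_range_iff hv.injective).mpr hv).extend (Set.subset_univ _) :=
    fun i => Module.Basis.subset_extend _ ⟨i, rfl⟩
  classical
  refine ⟨fun i => B.coord ⟨v i, hmem i⟩, fun i j => ?_⟩
  have hB : B ⟨v j, hmem j⟩ = v j := Module.Basis.extend_apply_self _ _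
  rw [← hB, Module.Basis.coord_apply, Module.Basis.repr_self, Finsupp.single_apply]
  simp [Subtype.ext_iff, hv.injective.eq_iff, eq_comm]

theorem stmt_2 {V W : Type*} [AddCommGroup V] [Module ℂ V]
    [AddCommGroup W] [Module ℂ W]
    (e1 e2 : V) (f1 f2 f3 : W)
    (he : LinearIndependent ℂ ![e1, e2])
    (hf : LinearIndependent ℂ ![f1, f2, f3])
    (a b : ℂ) (ha : a ≠ 0) (hb : b ≠ 0)
    (u v w : ℂ)
    (hne : u • (e1 ⊗ₜ[ℂ] f1) + v • (e2 ⊗ₜ[ℂ] f2) + w • ((a • e1 + b • e2) ⊗ₜ[ℂ] f3) ≠ 0)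
    (h : ∃ (x : V) (y : W),
      u • (e1 ⊗ₜ[ℂ] f1) + v • (e2 ⊗ₜ[ℂ] f2) + w • ((a • e1 + b • e2) ⊗ₜ[ℂ] f3)
        = x ⊗ₜ[ℂ] y) :
    (u = 0 ∧ v = 0) ∨ (u = 0 ∧ w = 0) ∨ (v = 0 ∧ w = 0) := by
  obtain ⟨φ, hφ⟩ := exists_dual_family ![e1, e2] he
  obtain ⟨ψ, hψ⟩ := exists_dual_family ![f1, f2, f3] hf
  obtain ⟨x, y, hxy⟩ := h
  set P : Fin 2 → Fin 3 → (V ⊗[ℂ] W →ₗ[ℂ] ℂ) := fun i j =>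
    (TensorProduct.lid ℂ ℂ).toLinearMap ∘ₗ TensorProduct.map (φ i) (ψ j) with hP
  have hPt : ∀ (i : Fin 2) (j : Fin 3) (p : V) (q : W),
      P i j (p ⊗ₜ[ℂ] q) = φ i p * ψ j q := by
    intro i j p q
    simp [hP, TensorProduct.lid_tmul, smul_eq_mul, mul_comm]
  have p00 : φ 0 e1 = 1 := by simpa using hφ 0 0
  have p01 : φ 0 e2 = 0 := by simpa using hφ 0 1
  have p10 : φ 1 e1 = 0 := by simpa using hφ 1 0
  have p11 : φ 1 e2 = 1 := by simpa using hφ 1 1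
  have q00 : ψ 0 f1 = 1 := by simpa using hψ 0 0
  have q01 : ψ 0 f2 = 0 := by simpa using hψ 0 1
  have q02 : ψ 0 f3 = 0 := by simpa using hψ 0 2
  have q10 : ψ 1 f1 = 0 := by simpa using hψ 1 0
  have q11 : ψ 1 f2 = 1 := by simpa using hψ 1 1
  have q12 : ψ 1 f3 = 0 := by simpa using hψ 1 2
  have q20 : ψ 2 f1 = 0 := by simpa using hψ 2 0
  have q21 : ψ 2 f2 = 0 := by simpa using hψ 2 1
  have q22 : ψ 2 f3 = 1 := by simpa using hψ 2 2
  have key : ∀ (i : Fin 2) (j : Fin 3),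
      φ i x * ψ j y =
        u * (φ i e1 * ψ j f1) + v * (φ i e2 * ψ j f2)
          + w * ((a * φ i e1 + b * φ i e2) * ψ j f3) := by
    intro i j
    have hc := congrArg (P i j) hxy
    rw [hPt] at hc
    rw [← hc]
    simp only [map_add, map_smul, hPt, smul_eq_mul]
  have h11 : φ 0 x * ψ 0 y = u := by
    have := key 0 0; rw [p00, p01, q00, q01, q02] at this; rw [this]; ring
  have h12 : φ 0 x * ψ 1 y = 0 := by
    have := key 0 1; rw [p00, p01, q10, q11, q12] at this; rw [this]; ring
  have h13 : φ 0 x * ψ 2 y = w * a := by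
    have := key 0 2; rw [p00, p01, q20, q21, q22] at this; rw [this]; ring
  have h21 : φ 1 x * ψ 0 y = 0 := by
    have := key 1 0; rw [p10, p11, q00, q01, q02] at this; rw [this]; ring
  have h22 : φ 1 x * ψ 1 y = v := by
    have := key 1 1; rw [p10, p11, q10, q11, q12] at this; rw [this]; ring
  have h23 : φ 1 x * ψ 2 y = w * b := by
    have := key 1 2; rw [p10, p11, q20, q21, q22] at this; rw [this]; ring
  have huv : u * v = 0 := by
    have : u * v = (φ 0 x * ψ 1 y) * (φ 1 x * ψ 0 y) := by
      rw [← h11, ← h22]; ring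
    rw [h12, h21] at this; simpa using this
  have huw : u * w = 0 := by
    have : u * (w * b) = (φ 0 x * ψ 0 y) * (φ 1 x * ψ 2 y) := by rw [h11, h23]
    rw [show (φ 0 x * ψ 0 y) * (φ 1 x * ψ 2 y) = (φ 0 x * ψ 2 y) * (φ 1 x * ψ 0 y) by ring,
      h13, h21, mul_zero] at this
    rcases mul_eq_zero.mp this with h' | h'
    · simp [h']
    · rcases mul_eq_zero.mp h' with h'' | h''
      · simp [h'']
      · exact absurd h'' hb
  have hvw : v * w = 0 := by
    have : v * (w * a) = (φ 1 x * ψ 1 y) * (φ 0 x * ψ 2 y) := by rw [h22, h13]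
    rw [show (φ 1 x * ψ 1 y) * (φ 0 x * ψ 2 y) = (φ 0 x * ψ 1 y) * (φ 1 x * ψ 2 y) by ring,
      h12, zero_mul] at this
    rcases mul_eq_zero.mp this with h' | h'
    · simp [h']
    · rcases mul_eq_zero.mp h' with h'' | h''
      · simp [h'']
      · exact absurd h'' ha
  rcases mul_eq_zero.mp huv with hu | hv
  · rcases mul_eq_zero.mp hvw with hv | hw
    · exact Or.inl ⟨hu, hv⟩
    · exact Or.inr (Or.inl ⟨hu, hw⟩)
  · rcases mul_eq_zero.mp huw with hu | hw
    · exact Or.inl ⟨hu, hv⟩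
    · exact Or.inr (Or.inr ⟨hv, hw⟩)
end

section
/- Let V and W be complex vector spaces, e₁, e₂ ∈ V linearly independent, and f₁, f₂, f₃ ∈ W linearly independent. If u·(e₁ ⊗ f₁) + v·(e₂ ⊗ f₂) + w·(e₂ ⊗ f₃) is a simple tensor x ⊗ y, then u = 0 or (v = 0 and w = 0). -/
/-!
A pure tensor `x ⊗ y` has vanishing `2 × 2` minors: for functionals `φ, φ'` on `V` and `ψ, ψ'` on
`W`, the pairings satisfy `⟨φ⊗ψ⟩⟨φ'⊗ψ'⟩ = ⟨φ⊗ψ'⟩⟨φ'⊗ψ⟩`. Pairing the given tensor against the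
duals `φ₁, φ₂` of `e₁, e₂` and `ψ₁, ψ₂, ψ₃` of `f₁, f₂, f₃` turns this into `u v = 0 · 0` and
`u w = 0 · 0`.
-/

open TensorProduct Module

theorem LinearIndependent.exists_dual_eq_ite {K V ι : Type*} [Field K] [AddCommGroup V]
    [Module K V] [DecidableEq ι] {v : ι → V} (hv : LinearIndependent K v) :
    ∃ φ : ι → Dual K V, ∀ i j, φ i (v j) = if i = j then 1 else 0 := by
  let b := Basis.span hv
  have (i : ι) : ∃ φ : Dual K V, ∀ j, φ (v j) = if i = j then 1 else 0 := by
    obtain ⟨φ, hφ⟩ := LinearMap.exists_extend (b.coord i)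
    refine ⟨φ, fun j => ?_⟩
    have hb : (b j : V) = v j := congrArg Subtype.val (Basis.span_apply hv j)
    rw [← hb, ← Submodule.subtype_apply, ← LinearMap.comp_apply, hφ, b.coord_apply, b.repr_self,
      Finsupp.single_apply]
    exact if_congr eq_comm rfl rfl
  choose φ hφ using this
  exact ⟨φ, hφ⟩

theorem dualDistrib_mul_dualDistrib_tmul_swap {R M N : Type*} [CommRing R] [AddCommGroup M]
    [Module R M] [AddCommGroup N] [Module R N]
    (φ φ' : Dual R M) (ψ ψ' : Dual R N) (x : M) (y : N) :
    dualDistrib R M N (φ ⊗ₜ ψ) (x ⊗ₜ y) * dualDistrib R M N (φ' ⊗ₜ ψ') (x ⊗ₜ y) =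
      dualDistrib R M N (φ ⊗ₜ ψ') (x ⊗ₜ y) * dualDistrib R M N (φ' ⊗ₜ ψ) (x ⊗ₜ y) := by
  simp only [dualDistrib_apply]
  ring

theorem stmt_3 {V W : Type*} [AddCommGroup V] [Module ℂ V]
    [AddCommGroup W] [Module ℂ W]
    (e1 e2 : V) (f1 f2 f3 : W)
    (he : LinearIndependent ℂ ![e1, e2])
    (hf : LinearIndependent ℂ ![f1, f2, f3])
    (u v w : ℂ)
    (h : ∃ (x : V) (y : W),
      u • (e1 ⊗ₜ[ℂ] f1) + v • (e2 ⊗ₜ[ℂ] f2) + w • (e2 ⊗ₜ[ℂ] f3) = x ⊗ₜ[ℂ] y) :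
    u = 0 ∨ (v = 0 ∧ w = 0) := by
  obtain ⟨x, y, hxy⟩ := h
  obtain ⟨φ, hφ⟩ := he.exists_dual_eq_ite
  obtain ⟨ψ, hψ⟩ := hf.exists_dual_eq_ite
  simp only [Fin.forall_fin_succ, Matrix.cons_val, Fin.succ_zero_eq_one, Fin.succ_one_eq_two,
    IsEmpty.forall_iff, and_true, Fin.reduceEq, ↓reduceIte] at hφ hψ
  have minor (j : Fin 3) := dualDistrib_mul_dualDistrib_tmul_swap (φ 0) (φ 1) (ψ 0) (ψ j) x y
  rw [← hxy] at minor
  have huv : u * v = 0 := by simpa [hφ, hψ] using minor 1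
  have huw : u * w = 0 := by simpa [hφ, hψ] using minor 2
  by_cases hu : u = 0
  · exact .inl hu
  · exact .inr ⟨(mul_eq_zero.1 huv).resolve_left hu, (mul_eq_zero.1 huw).resolve_left hu⟩
end

section
/- Let a, b, c, d ∈ ℂ all be nonzero, and suppose a·d = b·c. In ℂ² ⊗ ℂ² with standard bases e₁, e₂ and f₁, f₂, every nonzero simple tensor contained in the span of { e₁ ⊗ f₁, e₂ ⊗ f₂, (a·e₁ + b·e₂) ⊗ (c·f₁ + d·f₂) } is of the form (x·e₁ + z·e₂) ⊗ (x·f₁ + z·f₂) up to a nonzero scalar, for some (x, z) ∈ ℂ² \ {0}. Conversely every such tensor lies in this span. -/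
/-!
The determinant pairing `u ⊗ v ↦ u₀ v₁ - u₁ v₀` kills `e₀ ⊗ e₀`, `e₁ ⊗ e₁` and, because
`a d = b c`, also `(a e₀ + b e₁) ⊗ (c e₀ + d e₁)`. So a simple tensor `x ⊗ y` in the span has
`y` proportional to `x`, i.e. it is a multiple of `x ⊗ x`. Conversely, since `a d ≠ 0`, the
third generator minus its `e₀ ⊗ e₀` and `e₁ ⊗ e₁` components is a nonzero multiple of the
symmetric tensor `e₀ ⊗ e₁ + e₁ ⊗ e₀`; together with `e₀ ⊗ e₀` and `e₁ ⊗ e₁` it spans every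
`v ⊗ v`.
-/

open TensorProduct

section CommRing

variable {R : Type*} [CommRing R]

def detForm : (Fin 2 → R) ⊗[R] (Fin 2 → R) →ₗ[R] R :=
  lift <| LinearMap.mk₂ R (fun u v => u 0 * v 1 - u 1 * v 0)
    (fun _ _ _ => by simp only [Pi.add_apply]; ring)
    (fun _ _ _ => by simp only [Pi.smul_apply, smul_eq_mul]; ring)
    (fun _ _ _ => by simp only [Pi.add_apply]; ring)
    (fun _ _ _ => by simp only [Pi.smul_apply, smul_eq_mul]; ring)

@[simp]
lemma detForm_tmul (u v : Fin 2 → R) : detForm (u ⊗ₜ v) = u 0 * v 1 - u 1 * v 0 := rfl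

lemma eq_smul_single_add_smul_single (x : Fin 2 → R) :
    x = x 0 • Pi.single 0 1 + x 1 • Pi.single 1 1 := by
  simpa [Fin.sum_univ_two] using pi_eq_sum_univ' x

lemma span_le_ker_detForm {a b c d : R} (habcd : a * d = b * c) :
    Submodule.span R {Pi.single 0 1 ⊗ₜ[R] Pi.single 0 1,
      Pi.single 1 1 ⊗ₜ[R] Pi.single 1 1,
      (a • Pi.single 0 1 + b • Pi.single 1 1) ⊗ₜ[R]
        (c • Pi.single 0 1 + d • Pi.single 1 1)}
      ≤ LinearMap.ker (detForm (R := R)) := by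
  rw [Submodule.span_le]
  rintro _ (rfl | rfl | rfl) <;> simp [habcd]

end CommRing

section Field

variable {K : Type*} [Field K]

lemma tmul_self_mem_span {a b c d : K} (ha : a ≠ 0) (hd : d ≠ 0) (habcd : a * d = b * c)
    (v : Fin 2 → K) :
    v ⊗ₜ[K] v ∈ Submodule.span K {Pi.single 0 1 ⊗ₜ[K] Pi.single 0 1,
      Pi.single 1 1 ⊗ₜ[K] Pi.single 1 1,
      (a • Pi.single 0 1 + b • Pi.single 1 1) ⊗ₜ[K]
        (c • Pi.single 0 1 + d • Pi.single 1 1)} := by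
  set e₀ : Fin 2 → K := Pi.single 0 1
  set e₁ : Fin 2 → K := Pi.single 1 1
  set g := (a • e₀ + b • e₁) ⊗ₜ[K] (c • e₀ + d • e₁)
  set S := Submodule.span K {e₀ ⊗ₜ[K] e₀, e₁ ⊗ₜ[K] e₁, g}
  have h₀₀ : e₀ ⊗ₜ[K] e₀ ∈ S := Submodule.subset_span (by simp)
  have h₁₁ : e₁ ⊗ₜ[K] e₁ ∈ S := Submodule.subset_span (by simp)
  have hg : g ∈ S := Submodule.subset_span (by simp)
  have hsym : e₀ ⊗ₜ[K] e₁ + e₁ ⊗ₜ[K] e₀ ∈ S := by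
    have : e₀ ⊗ₜ[K] e₁ + e₁ ⊗ₜ[K] e₀ =
        (a * d)⁻¹ • (g - (a * c) • e₀ ⊗ₜ[K] e₀ - (b * d) • e₁ ⊗ₜ[K] e₁) := by
      rw [eq_inv_smul_iff₀ (mul_ne_zero ha hd)]
      simp only [g, tmul_add, add_tmul, tmul_smul, ← smul_tmul', smul_add, smul_smul]
      rw [mul_comm c b, ← habcd]
      module
    rw [this]
    exact S.smul_mem _ (sub_mem (sub_mem hg (S.smul_mem _ h₀₀)) (S.smul_mem _ h₁₁))
  have hv : v ⊗ₜ v = (v 0 * v 0) • e₀ ⊗ₜ[K] e₀ + (v 0 * v 1) • (e₀ ⊗ₜ[K] e₁ + e₁ ⊗ₜ[K] e₀)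
      + (v 1 * v 1) • e₁ ⊗ₜ[K] e₁ := by
    conv_lhs => rw [eq_smul_single_add_smul_single v]
    simp only [tmul_add, add_tmul, tmul_smul, ← smul_tmul', smul_add, smul_smul]
    module
  rw [hv]
  exact add_mem (add_mem (S.smul_mem _ h₀₀) (S.smul_mem _ hsym)) (S.smul_mem _ h₁₁)

lemma exists_eq_smul_of_mul_eq_mul {x y : Fin 2 → K} (hx : x ≠ 0)
    (h : x 0 * y 1 = x 1 * y 0) : ∃ γ : K, y = γ • x := by
  by_cases h0 : x 0 = 0
  · have h1 : x 1 ≠ 0 := fun h1 => hx (by ext i; fin_cases i <;> simp [h0, h1])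
    refine ⟨y 1 / x 1, ?_⟩
    ext i; fin_cases i <;> simp <;> field_simp
    linear_combination -h
  · refine ⟨y 0 / x 0, ?_⟩
    ext i; fin_cases i <;> simp <;> field_simp
    linear_combination h

end Field

theorem stmt_6_general (a b c d : ℂ)
    (ha : a ≠ 0) (hd : d ≠ 0)
    (habcd : a * d = b * c)
    (e : Fin 2 → (Fin 2 → ℂ)) (f : Fin 2 → (Fin 2 → ℂ))
    (he : ∀ i, e i = Pi.single i 1) (hf : ∀ i, f i = Pi.single i 1)
    (S : Submodule ℂ ((Fin 2 → ℂ) ⊗[ℂ] (Fin 2 → ℂ)))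
    (hS : S = Submodule.span ℂ
      {e 0 ⊗ₜ[ℂ] f 0, e 1 ⊗ₜ[ℂ] f 1,
        (a • e 0 + b • e 1) ⊗ₜ[ℂ] (c • f 0 + d • f 1)}) :
    (∀ t ∈ S, t ≠ 0 → (∃ (x y : Fin 2 → ℂ), t = x ⊗ₜ[ℂ] y) →
      ∃ (x z γ : ℂ), γ ≠ 0 ∧ (x, z) ≠ (0, 0) ∧
        t = γ • ((x • e 0 + z • e 1) ⊗ₜ[ℂ] (x • f 0 + z • f 1)))
    ∧ (∀ (x z γ : ℂ),
        γ • ((x • e 0 + z • e 1) ⊗ₜ[ℂ] (x • f 0 + z • f 1)) ∈ S) := by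
  subst hS
  simp only [he, hf]
  refine ⟨?_, fun x z γ => Submodule.smul_mem _ γ (tmul_self_mem_span ha hd habcd _)⟩
  rintro _ ht ht0 ⟨x, y, rfl⟩
  have hx : x ≠ 0 := by rintro rfl; simp at ht0
  have hy : y ≠ 0 := by rintro rfl; simp at ht0
  have hdet : x 0 * y 1 = x 1 * y 0 := sub_eq_zero.mp (span_le_ker_detForm habcd ht)
  obtain ⟨γ, rfl⟩ := exists_eq_smul_of_mul_eq_mul hx hdet
  refine ⟨x 0, x 1, γ, fun hγ => hy (by simp [hγ]), fun h => hx ?_, ?_⟩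
  · simp only [Prod.mk.injEq] at h
    ext i; fin_cases i <;> simp [h]
  · rw [tmul_smul, ← eq_smul_single_add_smul_single]

theorem stmt_6 (a b c d : ℂ)
    (ha : a ≠ 0) (hb : b ≠ 0) (hc : c ≠ 0) (hd : d ≠ 0)
    (habcd : a * d = b * c)
    (e : Fin 2 → (Fin 2 → ℂ)) (f : Fin 2 → (Fin 2 → ℂ))
    (he : ∀ i, e i = Pi.single i 1) (hf : ∀ i, f i = Pi.single i 1)
    (S : Submodule ℂ ((Fin 2 → ℂ) ⊗[ℂ] (Fin 2 → ℂ)))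
    (hS : S = Submodule.span ℂ
      {e 0 ⊗ₜ[ℂ] f 0, e 1 ⊗ₜ[ℂ] f 1,
        (a • e 0 + b • e 1) ⊗ₜ[ℂ] (c • f 0 + d • f 1)}) :
    (∀ t ∈ S, t ≠ 0 → (∃ (x y : Fin 2 → ℂ), t = x ⊗ₜ[ℂ] y) →
      ∃ (x z γ : ℂ), γ ≠ 0 ∧ (x, z) ≠ (0, 0) ∧
        t = γ • ((x • e 0 + z • e 1) ⊗ₜ[ℂ] (x • f 0 + z • f 1)))
    ∧ (∀ (x z γ : ℂ),
        γ • ((x • e 0 + z • e 1) ⊗ₜ[ℂ] (x • f 0 + z • f 1)) ∈ S) :=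
  stmt_6_general a b c d ha hd habcd e f he hf S hS
end

section
/- Let V, W be complex vector spaces and let v₁ ⊗ w₁, v₂ ⊗ w₂ be simple tensors with {v₁, v₂} linearly independent and {w₁, w₂} linearly independent. Then the only simple tensors in span{v₁ ⊗ w₁, v₂ ⊗ w₂} are the scalar multiples of v₁ ⊗ w₁ and of v₂ ⊗ w₂. -/
/-!
Write the element of the span as `a • v₁ ⊗ w₁ + c • v₂ ⊗ w₂ = x ⊗ y`. Pairing with
`f ⊗ g`, where `f` and `g` run over functionals dual to `v₁, v₂` and to `w₁, w₂`, turns this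
into the statement that the diagonal matrix `diag(a, c)` equals the rank-one matrix
`(f_i x * g_j y)`. Its `2 × 2` minor vanishes, so `a * c = 0`.
-/

open TensorProduct Module

theorem LinearIndependent.exists_dual_apply_eq_single {K V ι : Type*} [Field K] [AddCommGroup V]
    [Module K V] {v : ι → V} (hv : LinearIndependent K v) (i : ι) :
    ∃ f : Dual K V, ∀ j, f (v j) = Finsupp.single i 1 j := by
  obtain ⟨f, hf⟩ := LinearMap.exists_extend (Finsupp.lapply (R := K) i ∘ₗ hv.repr)
  refine ⟨f, fun j => ?_⟩
  have hvj : v j ∈ Submodule.span K (Set.range v) := Submodule.subset_span ⟨j, rfl⟩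
  have hfj : f (v j) = hv.repr ⟨v j, hvj⟩ i := LinearMap.congr_fun hf ⟨v j, hvj⟩
  classical
  rw [hfj, hv.repr_eq_single j _ rfl, Finsupp.single_apply, Finsupp.single_apply]
  simp only [eq_comm]

theorem mul_eq_zero_of_smul_tmul_add_smul_tmul_eq_tmul {K V W : Type*} [Field K]
    [AddCommGroup V] [Module K V] [AddCommGroup W] [Module K W] {v₁ v₂ : V} {w₁ w₂ : W}
    (hv : LinearIndependent K ![v₁, v₂]) (hw : LinearIndependent K ![w₁, w₂])
    {a c : K} {x : V} {y : W} (h : a • v₁ ⊗ₜ[K] w₁ + c • v₂ ⊗ₜ[K] w₂ = x ⊗ₜ y) :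
    a * c = 0 := by
  obtain ⟨f₁, hf₁⟩ := hv.exists_dual_apply_eq_single 0
  obtain ⟨f₂, hf₂⟩ := hv.exists_dual_apply_eq_single 1
  obtain ⟨g₁, hg₁⟩ := hw.exists_dual_apply_eq_single 0
  obtain ⟨g₂, hg₂⟩ := hw.exists_dual_apply_eq_single 1
  have eval (f : Dual K V) (g : Dual K W) :
      f x * g y = a * (f v₁ * g w₁) + c * (f v₂ * g w₂) := by
    simpa using (congrArg (dualDistrib K V W (f ⊗ₜ g)) h).symm
  simp only [Fin.forall_fin_two, Matrix.cons_val_zero, Matrix.cons_val_one,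
    Finsupp.single_eq_same, Finsupp.single_eq_of_ne, ne_eq, zero_ne_one, one_ne_zero,
    not_false_eq_true] at hf₁ hf₂ hg₁ hg₂
  calc a * c = (f₁ x * g₁ y) * (f₂ x * g₂ y) := by simp [eval, hf₁, hf₂, hg₁, hg₂]
    _ = (f₁ x * g₂ y) * (f₂ x * g₁ y) := by ring
    _ = 0 := by simp [eval, hf₁, hf₂, hg₁, hg₂]

theorem stmt_10 {V W : Type*} [AddCommGroup V] [Module ℂ V]
    [AddCommGroup W] [Module ℂ W]
    (v1 v2 : V) (w1 w2 : W)
    (hv : LinearIndependent ℂ ![v1, v2])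
    (hw : LinearIndependent ℂ ![w1, w2])
    (t : V ⊗[ℂ] W)
    (ht : t ∈ Submodule.span ℂ {v1 ⊗ₜ[ℂ] w1, v2 ⊗ₜ[ℂ] w2})
    (hsimple : ∃ (x : V) (y : W), t = x ⊗ₜ[ℂ] y) :
    (∃ c : ℂ, t = c • (v1 ⊗ₜ[ℂ] w1)) ∨ (∃ c : ℂ, t = c • (v2 ⊗ₜ[ℂ] w2)) := by
  obtain ⟨x, y, rfl⟩ := hsimple
  obtain ⟨a, c, hac⟩ := Submodule.mem_span_pair.mp ht
  rcases mul_eq_zero.mp (mul_eq_zero_of_smul_tmul_add_smul_tmul_eq_tmul hv hw hac) with rfl | rfl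
  · exact Or.inr ⟨c, by simpa using hac.symm⟩
  · exact Or.inl ⟨a, by simpa using hac.symm⟩
end

section
/- Let V, W be finite-dimensional complex vector spaces and S ⊆ V ⊗ W a 3-dimensional subspace spanned by three simple tensors v₁ ⊗ w₁, v₂ ⊗ w₂, v₃ ⊗ w₃ such that v₁, v₂, v₃ are linearly independent and w₁, w₂, w₃ are linearly independent. Then the set of simple tensors in S is exactly the union of the three lines ℂ·(v₁ ⊗ w₁) ∪ ℂ·(v₂ ⊗ w₂) ∪ ℂ·(v₃ ⊗ w₃). -/
/-!
Dual families `F`, `G` sending `v`, `w` to the standard basis let one read off coefficients: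
pairing `x ⊗ y = ∑ cₖ • vₖ ⊗ wₖ` with `Fᵢ ⊗ Gⱼ` gives `Fᵢ x * Gⱼ y = δᵢⱼ cᵢ`. The matrix
`(Fᵢ x * Gⱼ y)` has rank at most one, so for `i ≠ j`
`cᵢ cⱼ = (Fᵢ x Gᵢ y)(Fⱼ x Gⱼ y) = (Fᵢ x Gⱼ y)(Fⱼ x Gᵢ y) = 0`: at most one coefficient survives.
-/

open TensorProduct

section
variable {K V W ι : Type*} [Field K] [AddCommGroup V] [Module K V] [AddCommGroup W] [Module K W]

theorem LinearIndependent.exists_linearMap_eq_single {v : ι → V} (hv : LinearIndependent K v) :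
    ∃ F : V →ₗ[K] ι →₀ K, ∀ j, F (v j) = Finsupp.single j 1 := by
  obtain ⟨F, hF⟩ := LinearMap.exists_extend hv.repr
  refine ⟨F, fun j => ?_⟩
  rw [← hv.repr_eq_single j ⟨v j, Submodule.subset_span ⟨j, rfl⟩⟩ rfl, ← hF]
  rfl

theorem eq_of_tmul_eq_sum_smul_tmul {v : ι → V} {w : ι → W}
    (hv : LinearIndependent K v) (hw : LinearIndependent K w) {x : V} {y : W} {c : ι →₀ K}
    (h : x ⊗ₜ[K] y = c.sum fun k a => a • (v k ⊗ₜ[K] w k)) {i j : ι} (hi : c i ≠ 0) (hj : c j ≠ 0) :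
    i = j := by
  classical
  obtain ⟨F, hF⟩ := hv.exists_linearMap_eq_single
  obtain ⟨G, hG⟩ := hw.exists_linearMap_eq_single
  have coeff : ∀ i j, F x i * G y j = if j = i then c j else 0 := by
    intro i j
    have := congrArg (dualDistrib K V W ((Finsupp.lapply i ∘ₗ F) ⊗ₜ (Finsupp.lapply j ∘ₗ G))) h
    simp only [dualDistrib_apply, LinearMap.coe_comp, Function.comp_apply, Finsupp.lapply_apply,
      map_finsuppSum, map_smul, hF, hG, Finsupp.single_apply, mul_ite, mul_one, mul_zero,
      smul_eq_mul, Finsupp.sum_ite_eq', Finsupp.mem_support_iff, ne_eq, ite_not] at this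
    rw [this]
    by_cases hcj : c j = 0 <;> simp [hcj]
  by_contra hij
  apply mul_ne_zero hi hj
  calc c i * c j = (F x i * G y i) * (F x j * G y j) := by simp [coeff]
    _ = (F x i * G y j) * (F x j * G y i) := by ring
    _ = 0 := by simp [coeff, hij, Ne.symm hij]

theorem mem_span_range_tmul_and_exists_eq_tmul_iff [Nonempty ι] {v : ι → V} {w : ι → W}
    (hv : LinearIndependent K v) (hw : LinearIndependent K w) (t : V ⊗[K] W) :
    (t ∈ Submodule.span K (Set.range fun i => v i ⊗ₜ[K] w i) ∧ ∃ (x : V) (y : W), t = x ⊗ₜ y) ↔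
      ∃ i, ∃ c : K, t = c • (v i ⊗ₜ[K] w i) := by
  constructor
  · rintro ⟨hmem, x, y, rfl⟩
    obtain ⟨c, hc⟩ := Finsupp.mem_span_range_iff_exists_finsupp.mp hmem
    obtain ⟨i, hi⟩ : ∃ i, ∀ j, c j ≠ 0 → j = i := by
      by_cases h : ∃ i, c i ≠ 0
      · obtain ⟨i, hi⟩ := h
        exact ⟨i, fun j hj => eq_of_tmul_eq_sum_smul_tmul hv hw hc.symm hj hi⟩
      · exact ⟨Classical.arbitrary ι, fun j hj => (h ⟨j, hj⟩).elim⟩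
    refine ⟨i, c i, ?_⟩
    rw [← hc, Finsupp.sum_eq_single i (fun j hj hji => (hji (hi j hj)).elim)
      (fun _ => zero_smul K _)]
  · rintro ⟨i, c, rfl⟩
    exact ⟨Submodule.smul_mem _ _ (Submodule.subset_span ⟨i, rfl⟩), c • v i, w i, smul_tmul' ..⟩

end

theorem stmt_13_general {V W : Type*} [AddCommGroup V] [Module ℂ V]
    [AddCommGroup W] [Module ℂ W]
    (v1 v2 v3 : V) (w1 w2 w3 : W)
    (hv : LinearIndependent ℂ ![v1, v2, v3])
    (hw : LinearIndependent ℂ ![w1, w2, w3]) :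
    {t : V ⊗[ℂ] W |
        t ∈ Submodule.span ℂ {v1 ⊗ₜ[ℂ] w1, v2 ⊗ₜ[ℂ] w2, v3 ⊗ₜ[ℂ] w3} ∧
        ∃ (x : V) (y : W), t = x ⊗ₜ[ℂ] y}
    = {t | ∃ c : ℂ, t = c • (v1 ⊗ₜ[ℂ] w1)} ∪
      {t | ∃ c : ℂ, t = c • (v2 ⊗ₜ[ℂ] w2)} ∪
      {t | ∃ c : ℂ, t = c • (v3 ⊗ₜ[ℂ] w3)} := by
  have hrange : (Set.range fun i => ![v1, v2, v3] i ⊗ₜ[ℂ] ![w1, w2, w3] i) =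
      {v1 ⊗ₜ w1, v2 ⊗ₜ w2, v3 ⊗ₜ w3} := by
    ext
    simp [Fin.exists_fin_succ, eq_comm]
  ext t
  have hiff := mem_span_range_tmul_and_exists_eq_tmul_iff hv hw t
  rw [hrange] at hiff
  simpa [Fin.exists_fin_succ, or_assoc] using hiff

theorem stmt_13 {V W : Type*} [AddCommGroup V] [Module ℂ V] [FiniteDimensional ℂ V]
    [AddCommGroup W] [Module ℂ W] [FiniteDimensional ℂ W]
    (v1 v2 v3 : V) (w1 w2 w3 : W)
    (hv : LinearIndependent ℂ ![v1, v2, v3])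
    (hw : LinearIndependent ℂ ![w1, w2, w3]) :
    {t : V ⊗[ℂ] W |
        t ∈ Submodule.span ℂ {v1 ⊗ₜ[ℂ] w1, v2 ⊗ₜ[ℂ] w2, v3 ⊗ₜ[ℂ] w3} ∧
        ∃ (x : V) (y : W), t = x ⊗ₜ[ℂ] y}
    = {t | ∃ c : ℂ, t = c • (v1 ⊗ₜ[ℂ] w1)} ∪
      {t | ∃ c : ℂ, t = c • (v2 ⊗ₜ[ℂ] w2)} ∪
      {t | ∃ c : ℂ, t = c • (v3 ⊗ₜ[ℂ] w3)} :=
  stmt_13_general v1 v2 v3 w1 w2 w3 hv hw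
end

section
/- The convex hull of the curve { (cos φ, sin φ, cos²φ − sin²φ) : 0 ≤ φ ≤ 2π } in ℝ³ equals the set { (x, y, z) ∈ ℝ³ : x² + y² ≤ 1 and 2x² − 1 ≤ z ≤ 1 − 2y² }. -/
/-!
On the unit circle `x² - y² = 2x² - 1 = 1 - 2y²`, so the curve is the circle lifted to the
parabolic cylinders `z = 2x² - 1` and `z = 1 - 2y²` at once. The region between these two
cylinders over the unit disk is convex, being cut out by convex quadratic inequalities, and it
contains the curve. Conversely, over a point `(x, y)` of the disk the region is a vertical
segment: its lower end lies on the chord of the curve at fixed `x`, its upper end on the chord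
at fixed `y`, so the whole segment lies in the convex hull.
-/

open Real Set

section Segment

variable {𝕜 E F : Type*} [Semiring 𝕜] [PartialOrder 𝕜] [AddCommMonoid E] [AddCommMonoid F]
  [Module 𝕜 E] [Module 𝕜 F]

lemma Prod.mk_mem_segment_left {x x₁ x₂ : E} (y : F) (h : x ∈ segment 𝕜 x₁ x₂) :
    (x, y) ∈ segment 𝕜 (x₁, y) (x₂, y) :=
  Prod.image_mk_segment_left (𝕜 := 𝕜) x₁ x₂ y ▸ mem_image_of_mem _ h

lemma Prod.mk_mem_segment_right (x : E) {y y₁ y₂ : F} (h : y ∈ segment 𝕜 y₁ y₂) :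
    (x, y) ∈ segment 𝕜 (x, y₁) (x, y₂) :=
  Prod.image_mk_segment_right (𝕜 := 𝕜) x y₁ y₂ ▸ mem_image_of_mem _ h

end Segment

lemma exists_mem_Ico_cos_eq_sin_eq {a b : ℝ} (h : a ^ 2 + b ^ 2 = 1) :
    ∃ φ ∈ Ico 0 (2 * π), cos φ = a ∧ sin φ = b := by
  set z : ℂ := ⟨a, b⟩
  have hz : ‖z‖ = 1 := by rw [Complex.norm_def, Complex.normSq_mk, ← sq, ← sq, h, sqrt_one]
  have hz₀ : z ≠ 0 := norm_ne_zero_iff.1 (hz ▸ one_ne_zero)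
  have hper : Function.Periodic (fun θ ↦ (cos θ, sin θ)) (2 * π) :=
    fun θ ↦ Prod.ext (cos_periodic θ) (sin_periodic θ)
  obtain ⟨φ, hφ, heq⟩ := hper.exists_mem_Ico₀ two_pi_pos z.arg
  simp only [Prod.mk.injEq, Complex.cos_arg hz₀, Complex.sin_arg, hz, div_one] at heq
  exact ⟨φ, hφ, heq.1.symm, heq.2.symm⟩

def liftedCircle : Set (ℝ × ℝ × ℝ) :=
  {p | p.1 ^ 2 + p.2.1 ^ 2 = 1 ∧ p.2.2 = p.1 ^ 2 - p.2.1 ^ 2}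

def parabolicLens : Set (ℝ × ℝ × ℝ) :=
  {p | p.1 ^ 2 + p.2.1 ^ 2 ≤ 1 ∧ 2 * p.1 ^ 2 - 1 ≤ p.2.2 ∧ p.2.2 ≤ 1 - 2 * p.2.1 ^ 2}

lemma setOf_cos_sin_eq_liftedCircle :
    {x : ℝ × ℝ × ℝ | ∃ φ : ℝ, 0 ≤ φ ∧ φ ≤ 2 * π ∧ x = (cos φ, sin φ, cos φ ^ 2 - sin φ ^ 2)} =
      liftedCircle := by
  ext ⟨x, y, z⟩
  constructor
  · rintro ⟨φ, -, -, h⟩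
    simp only [Prod.mk.injEq] at h
    obtain ⟨rfl, rfl, rfl⟩ := h
    exact ⟨cos_sq_add_sin_sq φ, rfl⟩
  · rintro ⟨hxy, rfl : z = x ^ 2 - y ^ 2⟩
    obtain ⟨φ, hφ, rfl, rfl⟩ := exists_mem_Ico_cos_eq_sin_eq hxy
    exact ⟨φ, hφ.1, hφ.2.le, rfl⟩

lemma liftedCircle_subset_parabolicLens : liftedCircle ⊆ parabolicLens := by
  rintro ⟨x, y, z⟩ ⟨hxy, rfl : z = x ^ 2 - y ^ 2⟩
  exact ⟨hxy.le, by linarith, by linarith⟩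

lemma convex_parabolicLens : Convex ℝ parabolicLens := by
  rintro ⟨x, y, z⟩ ⟨h₁, h₂, h₃⟩ ⟨x', y', z'⟩ ⟨h₁', h₂', h₃'⟩ u v hu hv huv
  have hsq (p q : ℝ) : (u * p + v * q) ^ 2 ≤ u * p ^ 2 + v * q ^ 2 :=
    even_two.convexOn_pow.2 (mem_univ p) (mem_univ q) hu hv huv
  have hx := hsq x x'
  have hy := hsq y y'
  simp only [parabolicLens, mem_ofPred_eq, Prod.smul_mk, Prod.mk_add_mk, smul_eq_mul] at *
  refine ⟨by nlinarith, by nlinarith, by nlinarith⟩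

lemma lower_mem_convexHull_liftedCircle {x y : ℝ} (h : x ^ 2 + y ^ 2 ≤ 1) :
    (x, y, 2 * x ^ 2 - 1) ∈ convexHull ℝ liftedCircle := by
  have hy : y ^ 2 ≤ 1 - x ^ 2 := by linarith
  have hs : √(1 - x ^ 2) ^ 2 = 1 - x ^ 2 := sq_sqrt (by nlinarith)
  have mem (b : ℝ) (hb : b ^ 2 = 1 - x ^ 2) : (x, b, 2 * x ^ 2 - 1) ∈ liftedCircle :=
    ⟨by linarith, by linarith⟩
  exact segment_subset_convexHull (mem _ (by rw [neg_sq, hs])) (mem _ hs)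
    (Prod.mk_mem_segment_right _ (Prod.mk_mem_segment_left _
      (Icc_subset_segment ⟨neg_sqrt_le_of_sq_le hy, le_sqrt_of_sq_le hy⟩)))

lemma upper_mem_convexHull_liftedCircle {x y : ℝ} (h : x ^ 2 + y ^ 2 ≤ 1) :
    (x, y, 1 - 2 * y ^ 2) ∈ convexHull ℝ liftedCircle := by
  have hx : x ^ 2 ≤ 1 - y ^ 2 := by linarith
  have hs : √(1 - y ^ 2) ^ 2 = 1 - y ^ 2 := sq_sqrt (by nlinarith)
  have mem (a : ℝ) (ha : a ^ 2 = 1 - y ^ 2) : (a, y, 1 - 2 * y ^ 2) ∈ liftedCircle :=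
    ⟨by linarith, by linarith⟩
  exact segment_subset_convexHull (mem _ (by rw [neg_sq, hs])) (mem _ hs)
    (Prod.mk_mem_segment_left _
      (Icc_subset_segment ⟨neg_sqrt_le_of_sq_le hx, le_sqrt_of_sq_le hx⟩))

lemma parabolicLens_subset_convexHull : parabolicLens ⊆ convexHull ℝ liftedCircle := by
  rintro ⟨x, y, z⟩ ⟨hxy, hlower, hupper⟩
  exact (convex_convexHull ℝ _).segment_subset (lower_mem_convexHull_liftedCircle hxy)
    (upper_mem_convexHull_liftedCircle hxy)
    (Prod.mk_mem_segment_right _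
      (Prod.mk_mem_segment_right _ (Icc_subset_segment ⟨hlower, hupper⟩)))

theorem stmt_18 :
    convexHull ℝ
      {x : ℝ × ℝ × ℝ | ∃ φ : ℝ, 0 ≤ φ ∧ φ ≤ 2 * π ∧
        x = (Real.cos φ, Real.sin φ, Real.cos φ ^ 2 - Real.sin φ ^ 2)}
    = {x : ℝ × ℝ × ℝ | x.1 ^ 2 + x.2.1 ^ 2 ≤ 1 ∧
        2 * x.1 ^ 2 - 1 ≤ x.2.2 ∧ x.2.2 ≤ 1 - 2 * x.2.1 ^ 2} := by
  rw [setOf_cos_sin_eq_liftedCircle]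
  exact (convexHull_min liftedCircle_subset_parabolicLens convex_parabolicLens).antisymm
    parabolicLens_subset_convexHull
end
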